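/- arXiv:2403.08894 — 4 statements merged into one kernel-verified Lean document; each statement's English description precedes it below -/
import Mathlib

section
/- Let E, A ∈ ℂ^{n×n}, b ∈ ℂ^n, and let V, W ∈ ℂ^{n×r} be such that the reduced pencil matrix W^H (z E − A) V ∈ ℂ^{r×r} is invertible for a point z ∈ ℂ at which zE − A is invertible. If (zE − A)^{-1} b ∈ range(V), then V v = (zE − A)^{-1} b, where v := (W^H(zE − A)V)^{-1} W^H b is the reduced resolvent solution. (Projection identity for interpolatory model reduction.) -/
open Matrix

/-! A Petrov–Galerkin projection reproduces every solution that lies in its trial space: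
if `P x = b` with `x = V c`, then `c` solves the reduced system `(Wᴴ P V) c = Wᴴ b`,
and invertibility of the reduced matrix makes it the only solution. -/

variable {R : Type*} [CommRing R] {m k : Type*} [Fintype m] [Fintype k] [DecidableEq k]

theorem Matrix.mulVec_eq_of_inv_mulVec_eq [DecidableEq m] {P : Matrix m m R} {b x : m → R}
    (hP : IsUnit P.det) (hx : P⁻¹ *ᵥ b = x) : P *ᵥ x = b := by
  rw [← hx, mulVec_mulVec, mul_nonsing_inv P hP, one_mulVec]

theorem Matrix.reduced_inv_mulVec_eq_of_mulVec_eq (Y : Matrix k m R) {P : Matrix m m R}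
    {V : Matrix m k R} {b : m → R} {c : k → R} (hred : IsUnit (Y * P * V).det)
    (hc : P *ᵥ (V *ᵥ c) = b) : (Y * P * V)⁻¹ *ᵥ (Y *ᵥ b) = c := by
  have hreduced : (Y * P * V) *ᵥ c = Y *ᵥ b := by
    rw [← hc, mulVec_mulVec, mulVec_mulVec, Matrix.mul_assoc]
  rw [← hreduced, mulVec_mulVec, nonsing_inv_mul _ hred, one_mulVec]

/-- projection identity: If `(zE − A)⁻¹ b ∈ range(V)` and the
reduced pencil `Wᴴ(zE − A)V` is invertible, then
`V v = (zE − A)⁻¹ b` for `v = (Wᴴ(zE−A)V)⁻¹ Wᴴ b`. -/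
theorem projection_identity_primal (n r : ℕ)
    (E A : Matrix (Fin n) (Fin n) ℂ) (b : Fin n → ℂ)
    (V W : Matrix (Fin n) (Fin r) ℂ) (z : ℂ)
    (hpencil : IsUnit (z • E - A).det)
    (hred : IsUnit (Wᴴ * (z • E - A) * V).det)
    (hrange : ∃ c : Fin r → ℂ, V.mulVec c = (z • E - A)⁻¹.mulVec b) :
    V.mulVec ((Wᴴ * (z • E - A) * V)⁻¹.mulVec (Wᴴ.mulVec b))
      = (z • E - A)⁻¹.mulVec b := by
  obtain ⟨c, hc⟩ := hrange
  have hsolves : (z • E - A) *ᵥ (V *ᵥ c) = b := mulVec_eq_of_inv_mulVec_eq hpencil hc.symm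
  rw [reduced_inv_mulVec_eq_of_mulVec_eq Wᴴ hred hsolves, hc]
end

section
/- Let E, A, Q ∈ ℂ^{n×n} with Q Hermitian, b ∈ ℂ^n, and V, W ∈ ℂ^{n×r} such that for a point z ∈ ℂ both zE − A and W^H(zE − A)V are invertible, and moreover (zE − A)^{-H} Q (zE − A)^{-1} b ∈ range(W). Define w := (W^H(zE−A)V)^{-H} (V^H Q V) (W^H(zE−A)V)^{-1} W^H b. If additionally V V^H acts as the identity on (zE−A)^{-1}b (i.e., (zE−A)^{-1}b ∈ range(V) with V having orthonormal columns), then W w = (zE − A)^{-H} Q (zE − A)^{-1} b. -/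
/-!
Put `S = zE − A` and `M = Wᴴ S V`. If `S⁻¹ b = V c`, then `M c = Wᴴ b`, so the reduced system
returns exactly the coefficients `c`. The dual quantity `S⁻ᴴ Q S⁻¹ b = W d` is the solution of
`Sᴴ y = Q S⁻¹ b`, whose reduced system with the roles of `V` and `W` exchanged has matrix
`Vᴴ Sᴴ W = Mᴴ`; the same argument gives `M⁻ᴴ Vᴴ Q V c = d`, and hence `W w = W d`.
-/

open Matrix

namespace Matrix

variable {m k R : Type*} [Fintype m] [DecidableEq m] [Fintype k] [DecidableEq k] [CommRing R]

theorem galerkin_inv_mulVec_eq (L : Matrix k m R) {S : Matrix m m R} (V : Matrix m k R)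
    {b : m → R} {c : k → R} (hS : IsUnit S.det) (hLSV : IsUnit (L * S * V).det)
    (hc : V *ᵥ c = S⁻¹ *ᵥ b) : (L * S * V)⁻¹ *ᵥ (L *ᵥ b) = c := by
  have hreduced : (L * S * V) *ᵥ c = L *ᵥ b := by
    rw [← mulVec_mulVec, hc, ← mulVec_mulVec, mulVec_mulVec (v := b), mul_nonsing_inv _ hS,
      one_mulVec]
  rw [← hreduced, mulVec_mulVec, nonsing_inv_mul _ hLSV, one_mulVec]

end Matrix

theorem projection_identity_dual_general (n r : ℕ)
    (E A Q : Matrix (Fin n) (Fin n) ℂ) (b : Fin n → ℂ)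
    (V W : Matrix (Fin n) (Fin r) ℂ) (z : ℂ)
    (hpencil : IsUnit (z • E - A).det)
    (hred : IsUnit (Wᴴ * (z • E - A) * V).det)
    (hrangeW : ∃ c : Fin r → ℂ,
      W.mulVec c = ((z • E - A)ᴴ)⁻¹.mulVec (Q.mulVec ((z • E - A)⁻¹.mulVec b)))
    (hrangeV : ∃ c : Fin r → ℂ, V.mulVec c = (z • E - A)⁻¹.mulVec b) :
    W.mulVec
        (((Wᴴ * (z • E - A) * V)ᴴ)⁻¹.mulVec
          ((Vᴴ * Q * V).mulVec
            ((Wᴴ * (z • E - A) * V)⁻¹.mulVec (Wᴴ.mulVec b))))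
      = ((z • E - A)ᴴ)⁻¹.mulVec (Q.mulVec ((z • E - A)⁻¹.mulVec b)) := by
  obtain ⟨c, hc⟩ := hrangeV
  obtain ⟨d, hd⟩ := hrangeW
  have hprimal := galerkin_inv_mulVec_eq Wᴴ V hpencil hred hc
  have hadjoint : (Wᴴ * (z • E - A) * V)ᴴ = Vᴴ * (z • E - A)ᴴ * W := by
    rw [conjTranspose_mul, conjTranspose_mul, conjTranspose_conjTranspose, Matrix.mul_assoc]
  have hdual := galerkin_inv_mulVec_eq Vᴴ W
    (by rwa [det_conjTranspose, isUnit_star]) (by rwa [← hadjoint, det_conjTranspose, isUnit_star])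
    hd
  rw [hprimal, hadjoint, ← mulVec_mulVec, ← mulVec_mulVec, hc, hdual, hd]

/-- dual projection identity: Under range containment for `W`,
orthonormal columns of `V` with `(zE−A)⁻¹b ∈ range(V)`, and injectivity of `W`,
`W w = (zE − A)⁻ᴴ Q (zE − A)⁻¹ b` where
`w = (Wᴴ(zE−A)V)⁻ᴴ (Vᴴ Q V) (Wᴴ(zE−A)V)⁻¹ Wᴴ b`. -/
theorem projection_identity_dual (n r : ℕ)
    (E A Q : Matrix (Fin n) (Fin n) ℂ) (b : Fin n → ℂ) (hQ : Qᴴ = Q)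
    (V W : Matrix (Fin n) (Fin r) ℂ) (z : ℂ)
    (hpencil : IsUnit (z • E - A).det)
    (hred : IsUnit (Wᴴ * (z • E - A) * V).det)
    (hrangeW : ∃ c : Fin r → ℂ,
      W.mulVec c = ((z • E - A)ᴴ)⁻¹.mulVec (Q.mulVec ((z • E - A)⁻¹.mulVec b)))
    (hVorth : Vᴴ * V = 1)
    (hrangeV : ∃ c : Fin r → ℂ, V.mulVec c = (z • E - A)⁻¹.mulVec b)
    (hWinj : Function.Injective W.mulVec) :
    W.mulVec
        (((Wᴴ * (z • E - A) * V)ᴴ)⁻¹.mulVec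
          ((Vᴴ * Q * V).mulVec
            ((Wᴴ * (z • E - A) * V)⁻¹.mulVec (Wᴴ.mulVec b))))
      = ((z • E - A)ᴴ)⁻¹.mulVec (Q.mulVec ((z • E - A)⁻¹.mulVec b)) :=
  projection_identity_dual_general n r E A Q b V W z hpencil hred hrangeW hrangeV
end

section
/- (Lagrange interpolation via Galerkin projection) Let E, A, Q ∈ ℂ^{n×n} with Q Hermitian, b ∈ ℂ^n, and let z ∈ ℂ be such that zE − A is invertible. Let V, W ∈ ℂ^{n×r} with W^H(zE−A)V invertible and (zE − A)^{-1} b ∈ range(V). Define the reduced model Ê = W^H E V, Â = W^H A V, Q̂ = V^H Q V, b̂ = W^H b, and the transfer functions H(z) = b^H (zE−A)^{-H} Q (zE−A)^{-1} b and Ĥ(z) = b̂^H (zÊ−Â)^{-H} Q̂ (zÊ−Â)^{-1} b̂. Then Ĥ(z) = H(z). -/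
/-!
The Galerkin solution of the reduced system `Wᴴ(zE−A)V ĉ = Wᴴ b` is the coefficient vector `c`
with `V c = (zE−A)⁻¹ b`, because `Wᴴ(zE−A)V c = Wᴴ b` and the reduced pencil is invertible.
Both transfer functions are the `Q`-quadratic form of their state vector, and
`Vᴴ Q V` evaluated at `c` is `Q` evaluated at `V c = (zE−A)⁻¹ b`.
-/

open Matrix

namespace Matrix

variable {R : Type*} {m k : Type*} [Fintype m] [Fintype k]

theorem star_dotProduct_conjTranspose_mul_mulVec [CommSemiring R] [StarRing R] {l : Type*}
    [Fintype l] (M : Matrix m k R) (B : Matrix m l R) (u : k → R) (w : l → R) :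
    star u ⬝ᵥ (Mᴴ * B) *ᵥ w = star (M *ᵥ u) ⬝ᵥ B *ᵥ w := by
  rw [← mulVec_mulVec, dotProduct_mulVec, star_mulVec]

theorem star_dotProduct_inv_conjTranspose_mul_mul_inv_mulVec [CommRing R] [StarRing R]
    [DecidableEq m] (M Q : Matrix m m R) (b : m → R) :
    star b ⬝ᵥ ((Mᴴ)⁻¹ * Q * M⁻¹) *ᵥ b = star (M⁻¹ *ᵥ b) ⬝ᵥ Q *ᵥ (M⁻¹ *ᵥ b) := by
  rw [← conjTranspose_nonsing_inv, Matrix.mul_assoc, star_dotProduct_conjTranspose_mul_mulVec,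
    ← mulVec_mulVec]

theorem star_dotProduct_conjTranspose_mul_mul_mulVec [CommSemiring R] [StarRing R]
    (V : Matrix m k R) (Q : Matrix m m R) (c : k → R) :
    star c ⬝ᵥ (Vᴴ * Q * V) *ᵥ c = star (V *ᵥ c) ⬝ᵥ Q *ᵥ (V *ᵥ c) := by
  rw [Matrix.mul_assoc, star_dotProduct_conjTranspose_mul_mulVec, ← mulVec_mulVec]

theorem inv_mulVec_galerkin_eq [CommRing R] [DecidableEq m] [DecidableEq k]
    {M : Matrix m m R} (L : Matrix k m R) {V : Matrix m k R} (hM : IsUnit M.det)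
    (hLMV : IsUnit (L * M * V).det) {b : m → R} {c : k → R} (hc : V *ᵥ c = M⁻¹ *ᵥ b) :
    (L * M * V)⁻¹ *ᵥ (L *ᵥ b) = c := by
  have hsolve : (L * M * V) *ᵥ c = L *ᵥ b := by
    rw [← mulVec_mulVec, hc, mulVec_mulVec, Matrix.mul_assoc, mul_nonsing_inv _ hM,
      Matrix.mul_one]
  rw [← hsolve, mulVec_mulVec, nonsing_inv_mul _ hLMV, one_mulVec]

end Matrix

theorem lagrange_interpolation_quadratic_output_general (n r : ℕ)
    (E A Q : Matrix (Fin n) (Fin n) ℂ) (b : Fin n → ℂ)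
    (V W : Matrix (Fin n) (Fin r) ℂ) (z : ℂ)
    (hpencil : IsUnit (z • E - A).det)
    (hred : IsUnit (Wᴴ * (z • E - A) * V).det)
    (hrange : ∃ c : Fin r → ℂ, V.mulVec c = (z • E - A)⁻¹.mulVec b)
    (Ehat Ahat Qhat : Matrix (Fin r) (Fin r) ℂ) (bhat : Fin r → ℂ)
    (hE : Ehat = Wᴴ * E * V) (hA : Ahat = Wᴴ * A * V)
    (hQhat : Qhat = Vᴴ * Q * V) (hb : bhat = Wᴴ.mulVec b) :
    star bhat ⬝ᵥ
        (((z • Ehat - Ahat)ᴴ)⁻¹ * Qhat * (z • Ehat - Ahat)⁻¹).mulVec bhat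
      = star b ⬝ᵥ (((z • E - A)ᴴ)⁻¹ * Q * (z • E - A)⁻¹).mulVec b := by
  obtain ⟨c, hc⟩ := hrange
  have hpencil_hat : z • Ehat - Ahat = Wᴴ * (z • E - A) * V := by
    rw [hE, hA, Matrix.mul_sub, Matrix.sub_mul, Matrix.mul_smul, Matrix.smul_mul]
  have hstate : (z • Ehat - Ahat)⁻¹ *ᵥ bhat = c := by
    rw [hpencil_hat, hb]
    exact inv_mulVec_galerkin_eq Wᴴ hpencil hred hc
  rw [star_dotProduct_inv_conjTranspose_mul_mul_inv_mulVec, hstate, hQhat,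
    star_dotProduct_conjTranspose_mul_mul_mulVec, hc,
    star_dotProduct_inv_conjTranspose_mul_mul_inv_mulVec]

/-- Lagrange interpolation via Galerkin projection: If
`(zE − A)⁻¹ b ∈ range(V)` and `Wᴴ(zE−A)V` is invertible, then the reduced
quadratic-output transfer function matches the full one at `z`: `Ĥ(z) = H(z)`. -/
theorem lagrange_interpolation_quadratic_output (n r : ℕ)
    (E A Q : Matrix (Fin n) (Fin n) ℂ) (b : Fin n → ℂ) (hQ : Qᴴ = Q)
    (V W : Matrix (Fin n) (Fin r) ℂ) (z : ℂ)
    (hpencil : IsUnit (z • E - A).det)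
    (hred : IsUnit (Wᴴ * (z • E - A) * V).det)
    (hrange : ∃ c : Fin r → ℂ, V.mulVec c = (z • E - A)⁻¹.mulVec b)
    (Ehat Ahat Qhat : Matrix (Fin r) (Fin r) ℂ) (bhat : Fin r → ℂ)
    (hE : Ehat = Wᴴ * E * V) (hA : Ahat = Wᴴ * A * V)
    (hQhat : Qhat = Vᴴ * Q * V) (hb : bhat = Wᴴ.mulVec b) :
    star bhat ⬝ᵥ
        (((z • Ehat - Ahat)ᴴ)⁻¹ * Qhat * (z • Ehat - Ahat)⁻¹).mulVec bhat
      = star b ⬝ᵥ (((z • E - A)ᴴ)⁻¹ * Q * (z • E - A)⁻¹).mulVec b :=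
  lagrange_interpolation_quadratic_output_general n r E A Q b V W z hpencil hred hrange Ehat Ahat
    Qhat bhat hE hA hQhat hb
end

section
/- (Tangential interpolation for linear-output systems) Let E, A ∈ ℂ^{n×n}, b ∈ ℂ^n, C ∈ ℂ^{p×n}, σ ∈ ℂ with σE − A invertible, and c ∈ ℂ^p a tangential direction. Let V, W ∈ ℂ^{n×r} with W^H(σE−A)V invertible. Define Ê = W^H E V, Â = W^H A V, b̂ = W^H b, Ĉ = C V, and the transfer functions G(s) = C(sE−A)^{-1}b and Ĝ(s) = Ĉ(sÊ−Â)^{-1}b̂. If (σE−A)^{-1}b ∈ range(V), then G(σ) = Ĝ(σ). If instead (σE−A)^{-H} C^H c ∈ range(W), then c^H G(σ) = c^H Ĝ(σ). -/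
/-!
Write `K = σE − A`. The reduced pencil is `σÊ − Â = Wᴴ K V`. If `V d = K⁻¹ b`, then
`Wᴴ K V d = Wᴴ b = b̂`, so `(σÊ − Â)⁻¹ b̂ = d` and `Ĝ(σ) = C V d = G(σ)`. Dually, if
`W d = K⁻ᴴ Cᴴ c`, then the row vector `dᴴ Wᴴ` solves `(dᴴ Wᴴ) K = cᴴ C`, and both `cᴴ G(σ)` and
`cᴴ Ĝ(σ)` collapse to `dᴴ b̂`. Written with row vectors, the argument needs no conjugation and
works over any commutative ring.
-/

open Matrix

namespace Matrix

variable {R ι κ ρ : Type*} [CommRing R] [Fintype ι] [DecidableEq ι] [Fintype κ] [DecidableEq κ]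

theorem dotProduct_inv_mulVec_of_vecMul_eq {M : Matrix ι ι R} (hM : IsUnit M.det)
    {x y : ι → R} (hxy : y ᵥ* M = x) (v : ι → R) : x ⬝ᵥ M⁻¹ *ᵥ v = y ⬝ᵥ v := by
  rw [dotProduct_mulVec, ← hxy, vecMul_vecMul, mul_nonsing_inv _ hM, vecMul_one]

variable {K : Matrix ι ι R} {L : Matrix κ ι R} {V : Matrix ι κ R}

theorem projected_inv_mulVec_eq_of_mulVec_eq (hK : IsUnit K.det) (hKV : IsUnit (L * K * V).det)
    {b : ι → R} {d : κ → R} (hd : V *ᵥ d = K⁻¹ *ᵥ b) :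
    (L * K * V)⁻¹ *ᵥ (L *ᵥ b) = d := by
  have hsolve : (L * K * V) *ᵥ d = L *ᵥ b := by
    rw [← mulVec_mulVec, hd, mulVec_mulVec, mul_nonsing_inv_cancel_right _ _ hK]
  rw [← hsolve, mulVec_mulVec, nonsing_inv_mul _ hKV, one_mulVec]

theorem projected_transfer_eq_of_right_tangential (hK : IsUnit K.det)
    (hKV : IsUnit (L * K * V).det) (C : Matrix ρ ι R) {b : ι → R} {d : κ → R}
    (hd : V *ᵥ d = K⁻¹ *ᵥ b) :
    (C * V) *ᵥ ((L * K * V)⁻¹ *ᵥ (L *ᵥ b)) = C *ᵥ (K⁻¹ *ᵥ b) := by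
  rw [projected_inv_mulVec_eq_of_mulVec_eq hK hKV hd, ← mulVec_mulVec, hd]

theorem projected_transfer_eq_of_left_tangential [Fintype ρ] (hK : IsUnit K.det)
    (hKV : IsUnit (L * K * V).det) {C : Matrix ρ ι R} {c : ρ → R} {z : κ → R}
    (hz : z ᵥ* L ᵥ* K = c ᵥ* C) (b : ι → R) :
    c ⬝ᵥ (C * V) *ᵥ ((L * K * V)⁻¹ *ᵥ (L *ᵥ b)) = c ⬝ᵥ C *ᵥ (K⁻¹ *ᵥ b) := by
  have hzKV : z ᵥ* (L * K * V) = c ᵥ* (C * V) := by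
    rw [← vecMul_vecMul, ← vecMul_vecMul, hz, vecMul_vecMul]
  rw [dotProduct_mulVec c (C * V), dotProduct_mulVec c C,
    dotProduct_inv_mulVec_of_vecMul_eq hK hz, dotProduct_inv_mulVec_of_vecMul_eq hKV hzKV,
    dotProduct_mulVec]

end Matrix

/-- tangential interpolation for linear-output systems:
if `(σE−A)⁻¹b ∈ range(V)` then `G(σ) = Ĝ(σ)`; if `(σE−A)⁻ᴴ Cᴴ c ∈ range(W)`
then `cᴴ G(σ) = cᴴ Ĝ(σ)`. -/
theorem tangential_interpolation_linear_output (n r p : ℕ)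
    (E A : Matrix (Fin n) (Fin n) ℂ) (b : Fin n → ℂ)
    (C : Matrix (Fin p) (Fin n) ℂ) (σ : ℂ) (c : Fin p → ℂ)
    (hpencil : IsUnit (σ • E - A).det)
    (V W : Matrix (Fin n) (Fin r) ℂ)
    (hred : IsUnit (Wᴴ * (σ • E - A) * V).det)
    (Ehat Ahat : Matrix (Fin r) (Fin r) ℂ) (bhat : Fin r → ℂ)
    (Chat : Matrix (Fin p) (Fin r) ℂ)
    (hE : Ehat = Wᴴ * E * V) (hA : Ahat = Wᴴ * A * V)
    (hb : bhat = Wᴴ.mulVec b) (hC : Chat = C * V)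
    (G Ghat : ℂ → Fin p → ℂ)
    (hG : ∀ s : ℂ, G s = C.mulVec ((s • E - A)⁻¹.mulVec b))
    (hGhat : ∀ s : ℂ, Ghat s = Chat.mulVec ((s • Ehat - Ahat)⁻¹.mulVec bhat)) :
    ((∃ d : Fin r → ℂ, V.mulVec d = (σ • E - A)⁻¹.mulVec b) → G σ = Ghat σ) ∧
      ((∃ d : Fin r → ℂ, W.mulVec d = ((σ • E - A)ᴴ)⁻¹.mulVec (Cᴴ.mulVec c)) →
        star c ⬝ᵥ G σ = star c ⬝ᵥ Ghat σ) := by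
  have hpencil_hat : σ • Ehat - Ahat = Wᴴ * (σ • E - A) * V := by
    rw [hE, hA, Matrix.mul_sub, Matrix.sub_mul, Matrix.mul_smul, Matrix.smul_mul]
  rw [hG, hGhat, hpencil_hat, hb, hC]
  refine ⟨fun ⟨d, hd⟩ => ?_, fun ⟨d, hd⟩ => ?_⟩
  · exact (projected_transfer_eq_of_right_tangential hpencil hred C hd).symm
  · have hpencilH : IsUnit (σ • E - A)ᴴ.det := by
      rw [det_conjTranspose]
      exact hpencil.star
    have hdual : (σ • E - A)ᴴ *ᵥ (W *ᵥ d) = Cᴴ *ᵥ c := by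
      rw [hd, mulVec_mulVec, mul_nonsing_inv _ hpencilH, one_mulVec]
    have hrow : star d ᵥ* Wᴴ ᵥ* (σ • E - A) = star c ᵥ* C := by
      simpa only [star_mulVec, conjTranspose_conjTranspose] using congrArg star hdual
    exact (projected_transfer_eq_of_left_tangential hpencil hred hrow b).symm
end
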